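/- arXiv:1608.08732 — 6 statements merged into one kernel-verified Lean document; each statement's English description precedes it below -/
import Mathlib

section
/- Suppose ξ_{1,r} < ξ_{2,r} (so ξ_r = ξ_{2,r}). Then the upper quantization coefficient of μ of order r at dimension ξ_r is finite, i.e. limsup_{n→∞} n^{r/ξ_r} · e_{n,r}(μ)^r < ∞. -/
/-! Write `κⱼ = ξⱼ / (ξⱼ + r)`. Since `ν = ∑ tᵢ ν ∘ fᵢ⁻¹`, a codebook for `ν` at scale `δ` is
assembled from the images under `fᵢ` of codebooks at the coarser scales `δ / (tᵢ sᵢ^r)`; the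
renewal equation `∑ (tᵢ sᵢ^r)^κ₁ = 1` then gives `O(δ^(-κ₁))` points with `r`-th power distortion
`O(δ^(1-κ₁))`. For `μ` one adds a `ν`-codebook at every scale. As `κ₁ < κ₂`, this extra cost is of
lower order in the renewal equation with exponent `κ₂`, so `μ` has codebooks of size `O(δ^(-κ₂))`
and distortion `O(δ^(1-κ₂))`; choosing `δ ≍ n^(-1/κ₂)` gives `e_{n,r}(μ)^r = O(n^(-r/ξ₂))`.
Both measures are supported on a ball because the `fᵢ` are contractions. -/

open MeasureTheory Filter Set Metric

/-- The `n`-th quantization error of order `r` of a measure `μ` on `ℝ^q`: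
`e_{n,r}(μ) = inf { (∫ d(x,α)^r dμ)^{1/r} : α ⊆ ℝ^q, 1 ≤ card α ≤ n }`. -/
noncomputable def quantErr {q : ℕ} (μ : Measure (EuclideanSpace ℝ (Fin q))) (r : ℝ)
    (n : ℕ) : ℝ :=
  sInf ((fun α : Finset (EuclideanSpace ℝ (Fin q)) =>
      (∫ x, infDist x (α : Set (EuclideanSpace ℝ (Fin q))) ^ r ∂μ) ^ (1 / r)) ''
    {α : Finset (EuclideanSpace ℝ (Fin q)) | α.Nonempty ∧ α.card ≤ n})

open scoped ENNReal NNReal Topology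

namespace Quantization

section Similitude

variable {X : Type*} [MetricSpace X] {f : X → X} {s : ℝ}

theorem lipschitzWith_of_dist_eq_mul (hs : 0 ≤ s) (hf : ∀ x y, dist (f x) (f y) = s * dist x y) :
    LipschitzWith (Real.toNNReal s) f :=
  LipschitzWith.of_dist_le_mul fun x y => by rw [hf, Real.coe_toNNReal _ hs]

theorem infDist_image_le_mul (hf : ∀ x y, dist (f x) (f y) = s * dist x y) {A : Set X}
    (hA : IsCompact A) (hne : A.Nonempty) (x : X) : infDist (f x) (f '' A) ≤ s * infDist x A := by
  obtain ⟨y, hy, hxy⟩ := hA.exists_infDist_eq_dist hne x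
  rw [hxy, ← hf]
  exact infDist_le_dist_of_mem (mem_image_of_mem f hy)

theorem _root_.LipschitzWith.eventually_mapsTo_closedBall {K : ℝ≥0} (hf : LipschitzWith K f)
    (hK : K < 1) (a : X) : ∀ᶠ R in atTop, MapsTo f (closedBall a (R + 1)) (closedBall a R) := by
  have hK' : (0 : ℝ) < 1 - K := sub_pos.2 (by exact_mod_cast hK)
  filter_upwards [eventually_ge_atTop ((K + dist (f a) a) / (1 - K))] with R hR x hx
  rw [div_le_iff₀ hK'] at hR
  rw [mem_closedBall] at hx ⊢
  calc dist (f x) a ≤ dist (f x) (f a) + dist (f a) a := dist_triangle _ _ _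
    _ ≤ K * (R + 1) + dist (f a) a := by
        gcongr
        exact (hf.dist_le_mul x a).trans (by gcongr)
    _ ≤ R := by nlinarith

end Similitude

section Support

variable {X : Type*} [MetricSpace X] [MeasurableSpace X] [OpensMeasurableSpace X]
  {m : Measure X} [IsFiniteMeasure m]

theorem tendsto_measure_compl_closedBall (a : X) :
    Tendsto (fun R : ℝ => m (closedBall a R)ᶜ) atTop (𝓝 0) := by
  have h := tendsto_measure_iInter_atTop (μ := m) (s := fun R : ℝ => (closedBall a R)ᶜ)
    (fun R => measurableSet_closedBall.compl.nullMeasurableSet)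
    (fun R R' hR => compl_subset_compl.2 (closedBall_subset_closedBall hR))
    ⟨0, measure_ne_top _ _⟩
  have hcover : (⋃ R : ℝ, closedBall a R) = univ :=
    eq_univ_of_forall fun x => mem_iUnion.2 ⟨dist x a, mem_closedBall.2 le_rfl⟩
  rwa [← compl_iUnion, hcover, compl_univ, measure_empty] at h

theorem eventually_measure_compl_closedBall_eq_zero {a : X}
    (h : ∀ᶠ R in atTop, m (closedBall a R)ᶜ ≤ m (closedBall a (R + 1))ᶜ) :
    ∀ᶠ R in atTop, m (closedBall a R)ᶜ = 0 := by
  obtain ⟨R₀, hR₀⟩ := eventually_atTop.1 h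
  filter_upwards [eventually_ge_atTop R₀] with R hR
  have hk : ∀ k : ℕ, m (closedBall a R)ᶜ ≤ m (closedBall a (R + k))ᶜ := by
    intro k
    induction k with
    | zero => simp
    | succ k ih =>
      push_cast
      rw [← add_assoc]
      exact ih.trans (hR₀ _ (by linarith [k.cast_nonneg (α := ℝ)]))
  have hlim := (tendsto_measure_compl_closedBall (m := m) a).comp
    (tendsto_atTop_add_const_left _ R tendsto_natCast_atTop_atTop)
  exact le_antisymm (ge_of_tendsto' hlim hk) zero_le

end Support

section SelfSimilarSupport

variable {X : Type*} [MetricSpace X] [MeasurableSpace X] [BorelSpace X]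
  {m : Measure X} [IsFiniteMeasure m]

theorem eventually_measure_compl_closedBall_eq_zero_of_selfSimilar {ι : Type*} [Fintype ι]
    {ρ : Measure X} {c s : ι → ℝ} {f : ι → X → X}
    (hm : m = ρ + ∑ i, ENNReal.ofReal (c i) • m.map (f i)) (hc : ∑ i, c i ≤ 1)
    (hc₀ : ∀ i, 0 ≤ c i) (hsim : ∀ i x y, dist (f i x) (f i y) = s i * dist x y)
    (hs : ∀ i, s i ∈ Ico (0 : ℝ) 1) {a : X} (hρ : ∀ᶠ R in atTop, ρ (closedBall a R)ᶜ = 0) :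
    ∀ᶠ R in atTop, m (closedBall a R)ᶜ = 0 := by
  have hlip : ∀ i, LipschitzWith (s i).toNNReal (f i) := fun i =>
    lipschitzWith_of_dist_eq_mul (hs i).1 (hsim i)
  have hf : ∀ i, Measurable (f i) := fun i => (hlip i).continuous.measurable
  have hmaps : ∀ᶠ R in atTop, ∀ i, MapsTo (f i) (closedBall a (R + 1)) (closedBall a R) :=
    eventually_all.2 fun i =>
      (hlip i).eventually_mapsTo_closedBall (Real.toNNReal_lt_one.2 (hs i).2) a
  refine eventually_measure_compl_closedBall_eq_zero ?_
  filter_upwards [hmaps, hρ] with R hR hρR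
  calc m (closedBall a R)ᶜ
      = ρ (closedBall a R)ᶜ + ∑ i, ENNReal.ofReal (c i) * m (f i ⁻¹' (closedBall a R)ᶜ) := by
        conv_lhs => rw [hm]
        simp only [Measure.add_apply, Measure.coe_finsetSum, Finset.sum_apply,
          Measure.smul_apply, smul_eq_mul,
          Measure.map_apply (hf _) measurableSet_closedBall.compl]
    _ ≤ ∑ i, ENNReal.ofReal (c i) * m (closedBall a (R + 1))ᶜ := by
        rw [hρR, zero_add]
        gcongr with i
        rw [preimage_compl]
        exact compl_subset_compl.2 (hR i)
    _ ≤ m (closedBall a (R + 1))ᶜ := by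
        rw [← Finset.sum_mul, ← ENNReal.ofReal_sum_of_nonneg fun i _ => hc₀ i]
        exact mul_le_of_le_one_left' (ENNReal.ofReal_le_one.2 hc)

end SelfSimilarSupport

section Distortion

variable {X : Type*} [MetricSpace X] [MeasurableSpace X] {m ρ : Measure X} {r : ℝ}

noncomputable def distortion (m : Measure X) (r : ℝ) (A : Set X) : ℝ≥0∞ :=
  ∫⁻ x, ENNReal.ofReal (infDist x A ^ r) ∂m

theorem distortion_smul (c : ℝ≥0∞) (A : Set X) :
    distortion (c • m) r A = c * distortion m r A := by
  simp only [distortion, lintegral_smul_measure, smul_eq_mul]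

theorem distortion_anti {A B : Set X} (hAB : A ⊆ B) (hA : A.Nonempty) (hr : 0 ≤ r) :
    distortion m r B ≤ distortion m r A :=
  lintegral_mono fun _ => ENNReal.ofReal_le_ofReal <|
    Real.rpow_le_rpow infDist_nonneg (infDist_le_infDist_of_subset hAB hA) hr

theorem distortion_singleton_ne_top [IsFiniteMeasure m] (hr : 0 ≤ r) {x₀ : X} {R : ℝ}
    (hR : m (closedBall x₀ R)ᶜ = 0) : distortion m r {x₀} ≠ ∞ := by
  refine ne_top_of_le_ne_top (b := ∫⁻ _, ENNReal.ofReal (R ^ r) ∂m)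
    (by rw [lintegral_const]; exact ENNReal.mul_ne_top ENNReal.ofReal_ne_top (measure_ne_top _ _))
    (lintegral_mono_ae ?_)
  filter_upwards [mem_ae_iff.2 hR] with x hx
  rw [infDist_singleton]
  exact ENNReal.ofReal_le_ofReal (Real.rpow_le_rpow dist_nonneg (mem_closedBall.1 hx) hr)

variable [BorelSpace X]

theorem measurable_ofReal_infDist_rpow (A : Set X) (hr : 0 ≤ r) :
    Measurable fun x => ENNReal.ofReal (infDist x A ^ r) :=
  ((continuous_infDist_pt A).rpow_const fun _ => Or.inr hr).measurable.ennreal_ofReal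

theorem distortion_map_le {f : X → X} {s : ℝ} (hf : ∀ x y, dist (f x) (f y) = s * dist x y)
    (hs : 0 ≤ s) (hr : 0 ≤ r) {A B : Set X} (hA : IsCompact A) (hAne : A.Nonempty)
    (hAB : f '' A ⊆ B) :
    distortion (m.map f) r B ≤ ENNReal.ofReal (s ^ r) * distortion m r A := by
  have hfm : Measurable f := (lipschitzWith_of_dist_eq_mul hs hf).continuous.measurable
  rw [distortion, lintegral_map (measurable_ofReal_infDist_rpow B hr) hfm, distortion,
    ← lintegral_const_mul' _ _ ENNReal.ofReal_ne_top]
  refine lintegral_mono fun x => ?_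
  rw [← ENNReal.ofReal_mul (Real.rpow_nonneg hs r), ← Real.mul_rpow hs infDist_nonneg]
  refine ENNReal.ofReal_le_ofReal (Real.rpow_le_rpow infDist_nonneg ?_ hr)
  exact (infDist_le_infDist_of_subset hAB (hAne.image f)).trans
    (infDist_image_le_mul hf hA hAne x)

theorem distortion_union_iUnion_image_le {ι : Type*} [Fintype ι] {c s : ι → ℝ}
    {f : ι → X → X} (hm : m = ρ + ∑ i, ENNReal.ofReal (c i) • m.map (f i))
    (hsim : ∀ i x y, dist (f i x) (f i y) = s i * dist x y) (hs : ∀ i, 0 ≤ s i) (hr : 0 ≤ r)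
    {B : Set X} (hB : B.Nonempty) {A : ι → Set X} (hA : ∀ i, IsCompact (A i))
    (hAne : ∀ i, (A i).Nonempty) :
    distortion m r (B ∪ ⋃ i, f i '' A i) ≤
      distortion ρ r B +
        ∑ i, ENNReal.ofReal (c i) * (ENNReal.ofReal (s i ^ r) * distortion m r (A i)) := by
  calc distortion m r (B ∪ ⋃ i, f i '' A i)
      = distortion ρ r (B ∪ ⋃ i, f i '' A i) +
          ∑ i, ENNReal.ofReal (c i) * distortion (m.map (f i)) r (B ∪ ⋃ i, f i '' A i) := by
        conv_lhs => rw [hm]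
        simp only [distortion, lintegral_add_measure, lintegral_finsetSum_measure,
          lintegral_smul_measure, smul_eq_mul]
    _ ≤ _ := by
        gcongr with i
        · exact distortion_anti subset_union_left hB hr
        · exact distortion_map_le (hsim i) (hs i) hr (hA i) (hAne i)
            (subset_union_of_subset_right (subset_iUnion (fun j => f j '' A j) i) B)

end Distortion

section Renewal

theorem mul_rpow_lt_one {ι : Type*} [Fintype ι] {w s : ι → ℝ} {r : ℝ}
    (hs : ∀ i, s i ∈ Ico (0 : ℝ) 1) (hr : 0 < r) (hw : ∀ i, 0 ≤ w i) (hsum : ∑ i, w i ≤ 1)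
    (i : ι) : w i * s i ^ r < 1 :=
  mul_lt_one_of_nonneg_of_lt_one_right
    ((Finset.single_le_sum (fun j _ => hw j) (Finset.mem_univ i)).trans hsum)
    (Real.rpow_nonneg (hs i).1 r) (Real.rpow_lt_one (hs i).1 (hs i).2 hr)

theorem rpow_le_rpow_abs_of_mem_Icc {δ T : ℝ} (hδ : δ ∈ Icc 1 T) (x : ℝ) : δ ^ x ≤ T ^ |x| :=
  (Real.rpow_le_rpow_of_exponent_le hδ.1 (le_abs_self x)).trans
    (Real.rpow_le_rpow (by linarith [hδ.1]) hδ.2 (abs_nonneg x))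

theorem rpow_mul_div_rpow_neg {u δ : ℝ} (hu : 0 < u) (hδ : 0 ≤ δ) (γ a : ℝ) :
    u ^ γ * (δ / u) ^ (-a) = δ ^ (-a) * u ^ (γ + a) := by
  rw [Real.div_rpow hδ hu.le, show γ + a = γ - -a by ring, Real.rpow_sub hu]
  ring

theorem sum_rpow_mul_sub_div {ι : Type*} [Fintype ι] {u : ι → ℝ} (hu : ∀ i, 0 < u i) {δ : ℝ}
    (hδ : 0 ≤ δ) (γ a b K K' : ℝ) :
    ∑ i, u i ^ γ * (K * (δ / u i) ^ (-a) - K' * (δ / u i) ^ (-b)) =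
      K * δ ^ (-a) * ∑ i, u i ^ (γ + a) - K' * δ ^ (-b) * ∑ i, u i ^ (γ + b) := by
  simp only [Finset.mul_sum, ← Finset.sum_sub_distrib]
  refine Finset.sum_congr rfl fun i _ => ?_
  have key := rpow_mul_div_rpow_neg (hu i) hδ γ
  calc u i ^ γ * (K * (δ / u i) ^ (-a) - K' * (δ / u i) ^ (-b))
      = K * (u i ^ γ * (δ / u i) ^ (-a)) - K' * (u i ^ γ * (δ / u i) ^ (-b)) := by ring
    _ = _ := by rw [key a, key b]; ring

theorem le_mul_rpow_sub_mul_rpow_of_mem_Icc {δ T : ℝ} (hδ : δ ∈ Icc 1 T) (a b D : ℝ) {K' : ℝ}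
    (hK' : 0 ≤ K') : D ≤ (|D| + K' * T ^ |b|) * T ^ |a| * δ ^ (-a) - K' * δ ^ (-b) := by
  have hT : 0 ≤ T := by linarith [hδ.1, hδ.2]
  have hδa : 0 ≤ δ ^ (-a) := Real.rpow_nonneg (by linarith [hδ.1]) _
  have h₁ : 1 ≤ T ^ |a| * δ ^ (-a) :=
    calc (1 : ℝ) = δ ^ a * δ ^ (-a) := by
          rw [← Real.rpow_add (by linarith [hδ.1]), add_neg_cancel, Real.rpow_zero]
      _ ≤ T ^ |a| * δ ^ (-a) :=
          mul_le_mul_of_nonneg_right (rpow_le_rpow_abs_of_mem_Icc hδ a) hδa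
  have h₂ : δ ^ (-b) ≤ T ^ |b| := abs_neg b ▸ rpow_le_rpow_abs_of_mem_Icc hδ (-b)
  have h₃ : |D| + K' * T ^ |b| ≤ (|D| + K' * T ^ |b|) * (T ^ |a| * δ ^ (-a)) :=
    le_mul_of_one_le_right (by positivity) h₁
  nlinarith [le_abs_self D, mul_le_mul_of_nonneg_left h₂ hK']

theorem mul_rpow_neg_le_of_le {δ T : ℝ} (hδ : δ ∈ Ioc 0 T) {a b : ℝ} (hba : b ≤ a) {K' : ℝ}
    (hK' : 0 ≤ K') : K' * δ ^ (-b) ≤ K' * T ^ (a - b) * δ ^ (-a) := by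
  have hsplit : δ ^ (-b) = δ ^ (a - b) * δ ^ (-a) := by
    rw [← Real.rpow_add hδ.1]
    ring_nf
  rw [hsplit, ← mul_assoc]
  exact mul_le_mul_of_nonneg_right (mul_le_mul_of_nonneg_left
    (Real.rpow_le_rpow hδ.1.le hδ.2 (by linarith)) hK') (Real.rpow_nonneg hδ.1.le _)

/-- Witness: `G δ = K δ^(-a) - K' δ^(-b)`; the correction term absorbs the inhomogeneity
`g δ^(-b)` because `∑ u_i^(γ+b) > 1`. -/
theorem exists_renewal_majorant {ι : Type*} [Fintype ι] {u : ι → ℝ} (hu₀ : ∀ i, 0 < u i)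
    (hu₁ : ∀ i, u i < 1) {γ a b : ℝ} (hba : b < a) (hsum : ∑ i, u i ^ (γ + a) = 1) {g : ℝ}
    (hg : 0 ≤ g) (D : ℝ) {T : ℝ} (hT : 1 ≤ T) :
    ∃ (G : ℝ → ℝ) (K : ℝ), 0 ≤ K ∧
      (∀ δ, 0 < δ → g * δ ^ (-b) + ∑ i, u i ^ γ * G (δ / u i) ≤ G δ) ∧
      (∀ δ ∈ Icc 1 T, D ≤ G δ) ∧ (∀ δ ∈ Ioc 0 T, 0 ≤ G δ) ∧
      ∀ δ, 0 < δ → G δ ≤ K * δ ^ (-a) := by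
  have hne : (Finset.univ : Finset ι).Nonempty :=
    Finset.nonempty_of_sum_ne_zero (hsum ▸ one_ne_zero)
  set S := ∑ i, u i ^ (γ + b)
  have hS : 1 < S := hsum ▸ Finset.sum_lt_sum_of_nonempty hne fun i _ =>
    Real.rpow_lt_rpow_of_exponent_gt (hu₀ i) (hu₁ i) (by linarith)
  set K' := g / (S - 1)
  have hK' : 0 ≤ K' := div_nonneg hg (by linarith)
  have hg' : g = K' * (S - 1) := (div_mul_cancel₀ g (by linarith : S - 1 ≠ 0)).symm
  have hT₀ : 0 < T := by linarith
  set K₁ := K' * T ^ (a - b)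
  set K₂ := (|D| + K' * T ^ |b|) * T ^ |a|
  have hK₁ : 0 ≤ K₁ := by positivity
  have hK₂ : 0 ≤ K₂ := by positivity
  refine ⟨fun δ => (K₁ + K₂) * δ ^ (-a) - K' * δ ^ (-b), K₁ + K₂, by positivity,
    fun δ hδ => ?_, fun δ hδ => ?_, fun δ hδ => ?_, fun δ hδ => ?_⟩
  · rw [sum_rpow_mul_sub_div hu₀ hδ.le, hsum, hg']
    linarith
  · have := le_mul_rpow_sub_mul_rpow_of_mem_Icc hδ a b D hK'
    have : 0 ≤ K₁ * δ ^ (-a) := mul_nonneg hK₁ (Real.rpow_nonneg (by linarith [hδ.1]) _)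
    linarith
  · have := mul_rpow_neg_le_of_le hδ hba.le hK'
    have : 0 ≤ K₂ * δ ^ (-a) := mul_nonneg hK₂ (Real.rpow_nonneg hδ.1.le _)
    linarith
  · exact sub_le_self _ (mul_nonneg hK' (Real.rpow_nonneg hδ.le _))

end Renewal

section Codebook

variable {X : Type*} [MetricSpace X] [MeasurableSpace X] {m ρ : Measure X} {r : ℝ}

def HasCodebook (m : Measure X) (r k d : ℝ) : Prop :=
  ∃ α : Finset X, α.Nonempty ∧ (α.card : ℝ) ≤ k ∧ distortion m r α ≤ ENNReal.ofReal d

theorem HasCodebook.mono {k k' d d' : ℝ} (h : HasCodebook m r k d) (hk : k ≤ k') (hd : d ≤ d') :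
    HasCodebook m r k' d' :=
  let ⟨α, hα, hαk, hαd⟩ := h
  ⟨α, hα, hαk.trans hk, hαd.trans (ENNReal.ofReal_le_ofReal hd)⟩

variable [BorelSpace X]

theorem HasCodebook.selfSimilar {ι : Type*} [Fintype ι] {c s : ι → ℝ} {f : ι → X → X}
    (hm : m = ρ + ∑ i, ENNReal.ofReal (c i) • m.map (f i))
    (hsim : ∀ i x y, dist (f i x) (f i y) = s i * dist x y) (hs : ∀ i, 0 ≤ s i)
    (hc : ∀ i, 0 ≤ c i) (hr : 0 ≤ r) {k₀ d₀ : ℝ} {k d : ι → ℝ} (h₀ : HasCodebook ρ r k₀ d₀)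
    (hd₀ : 0 ≤ d₀) (h : ∀ i, HasCodebook m r (k i) (d i)) (hd : ∀ i, 0 ≤ d i) :
    HasCodebook m r (k₀ + ∑ i, k i) (d₀ + ∑ i, c i * s i ^ r * d i) := by
  classical
  obtain ⟨β, hβ, hβk, hβd⟩ := h₀
  choose α hα hαk hαd using h
  refine ⟨β ∪ Finset.univ.biUnion fun i => (α i).image (f i),
    hβ.mono Finset.subset_union_left, ?_, ?_⟩
  · have hcard : (β ∪ Finset.univ.biUnion fun i => (α i).image (f i)).card ≤
        β.card + ∑ i, (α i).card := (Finset.card_union_le _ _).trans <| by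
      gcongr
      exact Finset.card_biUnion_le.trans (Finset.sum_le_sum fun i _ => Finset.card_image_le)
    calc ((β ∪ Finset.univ.biUnion fun i => (α i).image (f i)).card : ℝ)
        ≤ β.card + ∑ i, ((α i).card : ℝ) := by exact_mod_cast hcard
      _ ≤ k₀ + ∑ i, k i := add_le_add hβk (Finset.sum_le_sum fun i _ => hαk i)
  · simp only [Finset.coe_union, Finset.coe_biUnion, Finset.coe_univ, mem_univ, iUnion_true,
      Finset.coe_image]
    refine (distortion_union_iUnion_image_le hm hsim hs hr (by exact_mod_cast hβ)
      (fun i => (α i).finite_toSet.isCompact) (fun i => by exact_mod_cast hα i)).trans ?_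
    have hcsd : ∀ i, 0 ≤ c i * s i ^ r * d i := fun i =>
      mul_nonneg (mul_nonneg (hc i) (Real.rpow_nonneg (hs i) r)) (hd i)
    rw [ENNReal.ofReal_add hd₀ (Finset.sum_nonneg fun i _ => hcsd i),
      ENNReal.ofReal_sum_of_nonneg fun i _ => hcsd i]
    gcongr with i
    rw [ENNReal.ofReal_mul (mul_nonneg (hc i) (Real.rpow_nonneg (hs i) r)),
      ENNReal.ofReal_mul (hc i), mul_assoc]
    gcongr
    exact hαd i

/-- At a scale `δ ≤ 1` the codebook is a codebook for `ρ` at scale `δ` together with the images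
of codebooks for `m` at the coarser scales `δ / (c i * s i ^ r)`; at scales in `(1, T]` it is a
single point. The depth `n` only serves to make the recursion terminate. -/
theorem hasCodebook_of_selfSimilar {ι : Type*} [Fintype ι] {c s : ι → ℝ} {f : ι → X → X}
    (hm : m = ρ + ∑ i, ENNReal.ofReal (c i) • m.map (f i))
    (hsim : ∀ i x y, dist (f i x) (f i y) = s i * dist x y) (hs : ∀ i, 0 < s i)
    (hc : ∀ i, 0 < c i) (hr : 0 ≤ r) {T M : ℝ} (hT : ∀ i, 1 ≤ T * (c i * s i ^ r))
    (hM : ∀ i, c i * s i ^ r ≤ M) (hM₀ : 0 ≤ M) {k₀ d₀ : ℝ → ℝ}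
    (hρ : ∀ δ ∈ Ioc (0 : ℝ) 1, HasCodebook ρ r (k₀ δ) (d₀ δ))
    (hd₀ : ∀ δ ∈ Ioc (0 : ℝ) 1, 0 ≤ d₀ δ) {D : ℝ} (hm₁ : HasCodebook m r 1 D) {Φ Ψ : ℝ → ℝ}
    (hΦ₁ : ∀ δ ∈ Icc 1 T, 1 ≤ Φ δ) (hΨ₁ : ∀ δ ∈ Icc 1 T, D ≤ Ψ δ)
    (hΨ₀ : ∀ δ ∈ Ioc 0 T, 0 ≤ Ψ δ)
    (hΦ : ∀ δ ∈ Ioc (0 : ℝ) 1, k₀ δ + ∑ i, Φ (δ / (c i * s i ^ r)) ≤ Φ δ)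
    (hΨ : ∀ δ ∈ Ioc (0 : ℝ) 1, d₀ δ + ∑ i, c i * s i ^ r * Ψ (δ / (c i * s i ^ r)) ≤ Ψ δ)
    (n : ℕ) : ∀ δ ∈ Ioc 0 T, M ^ n < δ → HasCodebook m r (Φ δ) (Ψ δ) := by
  have hu : ∀ i, 0 < c i * s i ^ r := fun i => mul_pos (hc i) (Real.rpow_pos_of_pos (hs i) r)
  have base : ∀ δ ∈ Ioc 0 T, 1 < δ → HasCodebook m r (Φ δ) (Ψ δ) := fun δ hδ h₁ =>
    hm₁.mono (hΦ₁ δ ⟨h₁.le, hδ.2⟩) (hΨ₁ δ ⟨h₁.le, hδ.2⟩)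
  induction n with
  | zero => exact fun δ hδ h₁ => base δ hδ (by simpa using h₁)
  | succ n ih =>
    intro δ hδ hMδ
    rcases lt_or_ge 1 δ with h₁ | h₁
    · exact base δ hδ h₁
    have hδ₁ : δ ∈ Ioc (0 : ℝ) 1 := ⟨hδ.1, h₁⟩
    have hδi : ∀ i, δ / (c i * s i ^ r) ∈ Ioc 0 T := fun i =>
      ⟨div_pos hδ.1 (hu i), (div_le_iff₀ (hu i)).2 (h₁.trans (hT i))⟩
    have hMδi : ∀ i, M ^ n < δ / (c i * s i ^ r) := fun i => by
      rw [lt_div_iff₀ (hu i)]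
      calc M ^ n * (c i * s i ^ r) ≤ M ^ n * M := by gcongr; exact hM i
        _ = M ^ (n + 1) := (pow_succ M n).symm
        _ < δ := hMδ
    exact (HasCodebook.selfSimilar hm hsim (fun i => (hs i).le) (fun i => (hc i).le) hr
      (hρ δ hδ₁) (hd₀ δ hδ₁) (fun i => ih _ (hδi i) (hMδi i)) (fun i => hΨ₀ _ (hδi i))).mono
      (hΦ δ hδ₁) (hΨ δ hδ₁)

end Codebook

section CodebookBounds

variable {X : Type*} [MetricSpace X] [MeasurableSpace X] {m ρ : Measure X} {r : ℝ}

def HasCodebookBounds (m : Measure X) (r a b : ℝ) : Prop :=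
  ∃ C ≥ (0 : ℝ), ∃ D ≥ (0 : ℝ), ∀ δ ∈ Ioc (0 : ℝ) 1, HasCodebook m r (C * δ ^ (-a)) (D * δ ^ b)

theorem hasCodebookBounds_zero (x₀ : X) (r b : ℝ) : HasCodebookBounds (0 : Measure X) r 0 b :=
  ⟨1, zero_le_one, 0, le_rfl, fun _ _ =>
    ⟨{x₀}, Finset.singleton_nonempty x₀, by simp, by simp [distortion]⟩⟩

theorem HasCodebookBounds.smul {a b c : ℝ} (h : HasCodebookBounds m r a b) (hc : 0 ≤ c) :
    HasCodebookBounds (ENNReal.ofReal c • m) r a b := by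
  obtain ⟨C, hC, D, hD, h⟩ := h
  refine ⟨C, hC, c * D, mul_nonneg hc hD, fun δ hδ => ?_⟩
  obtain ⟨α, hα, hαk, hαd⟩ := h δ hδ
  refine ⟨α, hα, hαk, ?_⟩
  rw [distortion_smul, mul_assoc, ENNReal.ofReal_mul hc]
  gcongr

variable [BorelSpace X]

theorem HasCodebookBounds.of_selfSimilar {ι : Type*} [Fintype ι] {c s : ι → ℝ}
    {f : ι → X → X} {κ a b : ℝ} (hρ : HasCodebookBounds ρ r a b)
    (hm : m = ρ + ∑ i, ENNReal.ofReal (c i) • m.map (f i))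
    (hsim : ∀ i x y, dist (f i x) (f i y) = s i * dist x y) (hs : ∀ i, 0 < s i)
    (hc : ∀ i, 0 < c i) (hr : 0 ≤ r) (hu : ∀ i, c i * s i ^ r < 1)
    (hκ : ∑ i, (c i * s i ^ r) ^ κ = 1) (ha : a < κ) (hb : 1 - κ < b) {x₀ : X}
    (hm₀ : distortion m r {x₀} ≠ ∞) : HasCodebookBounds m r κ (1 - κ) := by
  obtain ⟨C, hC, D, hD, hρ⟩ := hρ
  have hu₀ : ∀ i, 0 < c i * s i ^ r := fun i => mul_pos (hc i) (Real.rpow_pos_of_pos (hs i) r)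
  obtain ⟨T, hT₁, hT⟩ : ∃ T : ℝ, 1 ≤ T ∧ ∀ i, 1 ≤ T * (c i * s i ^ r) :=
    ((eventually_ge_atTop 1).and (eventually_all.2 fun i =>
      (eventually_ge_atTop (c i * s i ^ r)⁻¹).mono fun T hT =>
        (inv_le_iff_one_le_mul₀ (hu₀ i)).1 hT)).exists
  obtain ⟨M, hM₀, hM₁, hM⟩ : ∃ M : ℝ, 0 ≤ M ∧ M < 1 ∧ ∀ i, c i * s i ^ r ≤ M := by
    have hev : ∀ᶠ M in 𝓝[<] (1 : ℝ), 0 ≤ M ∧ M < 1 ∧ ∀ i, c i * s i ^ r ≤ M :=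
      ((eventually_ge_nhds zero_lt_one).filter_mono nhdsWithin_le_nhds).and
        (eventually_mem_nhdsWithin.and (eventually_all.2 fun i =>
          (eventually_ge_nhds (hu i)).filter_mono nhdsWithin_le_nhds))
    exact hev.exists
  -- `Φ` majorizes the codebook sizes, `Ψ` the distortions.
  obtain ⟨Φ, KΦ, hKΦ, hΦ, hΦ₁, -, hΦK⟩ := exists_renewal_majorant hu₀ hu (γ := 0) ha
    (by simpa using hκ) hC 1 hT₁
  obtain ⟨Ψ, KΨ, hKΨ, hΨ, hΨ₁, hΨ₀, hΨK⟩ := exists_renewal_majorant hu₀ hu (γ := 1)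
    (a := κ - 1) (b := -b) (by linarith) (by simpa using hκ) hD (distortion m r {x₀}).toReal hT₁
  have hm₁ : HasCodebook m r 1 (distortion m r {x₀}).toReal :=
    ⟨{x₀}, Finset.singleton_nonempty x₀, by simp, by simp [ENNReal.ofReal_toReal hm₀]⟩
  refine ⟨KΦ, hKΦ, KΨ, hKΨ, fun δ hδ => ?_⟩
  obtain ⟨n, hn⟩ := exists_pow_lt_of_lt_one hδ.1 hM₁
  refine (hasCodebook_of_selfSimilar hm hsim hs hc hr hT hM hM₀ hρ
    (fun δ hδ => mul_nonneg hD (Real.rpow_nonneg hδ.1.le b)) hm₁ hΦ₁ hΨ₁ hΨ₀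
    (fun δ hδ => by simpa using hΦ δ hδ.1) (fun δ hδ => by simpa using hΨ δ hδ.1) n δ
    ⟨hδ.1, hδ.2.trans hT₁⟩ hn).mono (hΦK δ hδ.1) ?_
  simpa using hΨK δ hδ.1

end CodebookBounds

end Quantization

open Quantization

section QuantizationError

variable {q : ℕ} {μ : Measure (EuclideanSpace ℝ (Fin q))} {r : ℝ}

theorem quantErr_rpow_le (hr : 0 < r) {n : ℕ} {k d : ℝ} (h : HasCodebook μ r k d) (hk : k ≤ n)
    (hd : 0 ≤ d) : quantErr μ r n ^ r ≤ d := by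
  obtain ⟨α, hα, hαk, hαd⟩ := h
  have hnonneg : ∀ β : Finset (EuclideanSpace ℝ (Fin q)),
      0 ≤ ∫ x, infDist x (β : Set (EuclideanSpace ℝ (Fin q))) ^ r ∂μ :=
    fun β => integral_nonneg fun x => Real.rpow_nonneg infDist_nonneg r
  set I := ∫ x, infDist x (α : Set (EuclideanSpace ℝ (Fin q))) ^ r ∂μ with hI_def
  have hI : I ≤ d := by
    rw [hI_def]
    rw [integral_eq_lintegral_of_nonneg_ae
      (Eventually.of_forall fun x => Real.rpow_nonneg infDist_nonneg r)
      ((continuous_infDist_pt _).rpow_const fun _ => Or.inr hr.le).aestronglyMeasurable]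
    exact ENNReal.toReal_le_of_le_ofReal hd hαd
  have hle : quantErr μ r n ≤ I ^ (1 / r) :=
    csInf_le ⟨0, by rintro _ ⟨β, -, rfl⟩; exact Real.rpow_nonneg (hnonneg β) _⟩
      ⟨α, ⟨hα, by exact_mod_cast hαk.trans hk⟩, rfl⟩
  have hq₀ : 0 ≤ quantErr μ r n :=
    Real.sInf_nonneg (by rintro _ ⟨β, -, rfl⟩; exact Real.rpow_nonneg (hnonneg β) _)
  calc quantErr μ r n ^ r ≤ (I ^ (1 / r)) ^ r := Real.rpow_le_rpow hq₀ hle hr.le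
    _ = I := by rw [← Real.rpow_mul (hnonneg α), one_div_mul_cancel hr.ne', Real.rpow_one]
    _ ≤ d := hI

/-- With `n` points use the codebook at scale `δ = (max C 1 / n)^(1/κ)`. -/
theorem limsup_rpow_mul_quantErr_rpow_lt_top (hr : 0 < r) {κ : ℝ} (hκ : 0 < κ)
    (h : HasCodebookBounds μ r κ (1 - κ)) :
    limsup (fun n : ℕ => ENNReal.ofReal ((n : ℝ) ^ ((1 - κ) / κ) * quantErr μ r n ^ r)) atTop
      < ⊤ := by
  obtain ⟨C, -, D, hD, h⟩ := h
  set C' := max C 1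
  have hC' : 0 < C' := lt_max_of_lt_right one_pos
  refine lt_of_le_of_lt (limsup_le_of_le (by isBoundedDefault) ?_)
    (ENNReal.ofReal_lt_top (r := D * C' ^ ((1 - κ) / κ)))
  filter_upwards [eventually_ge_atTop ⌈C'⌉₊] with n hn
  have hn' : C' ≤ n := (Nat.le_ceil C').trans (by exact_mod_cast hn)
  have hn₀ : (0 : ℝ) < n := hC'.trans_le hn'
  set δ := (C' / n) ^ κ⁻¹
  have hδ : δ ∈ Ioc (0 : ℝ) 1 :=
    ⟨by positivity, Real.rpow_le_one (by positivity) ((div_le_one hn₀).2 hn') (by positivity)⟩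
  have hδκ : δ ^ (-κ) = n / C' := by
    rw [← Real.rpow_mul (by positivity), inv_mul_eq_div, neg_div, div_self hκ.ne',
      Real.rpow_neg_one, inv_div]
  have hδerr : δ ^ (1 - κ) = C' ^ ((1 - κ) / κ) * (n : ℝ) ^ (-((1 - κ) / κ)) := by
    rw [← Real.rpow_mul (by positivity), inv_mul_eq_div, Real.div_rpow hC'.le hn₀.le,
      Real.rpow_neg hn₀.le, div_eq_mul_inv]
  have hq := quantErr_rpow_le hr (h δ hδ) (by
    calc C * δ ^ (-κ) ≤ C' * δ ^ (-κ) := by gcongr; exact le_max_left C 1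
      _ = n := by rw [hδκ]; field_simp) (mul_nonneg hD (by positivity))
  refine ENNReal.ofReal_le_ofReal ?_
  calc (n : ℝ) ^ ((1 - κ) / κ) * quantErr μ r n ^ r
      ≤ (n : ℝ) ^ ((1 - κ) / κ) * (D * δ ^ (1 - κ)) := by gcongr
    _ = D * C' ^ ((1 - κ) / κ) * ((n : ℝ) ^ ((1 - κ) / κ) * (n : ℝ) ^ (-((1 - κ) / κ))) := by
        rw [hδerr]; ring
    _ = D * C' ^ ((1 - κ) / κ) := by
        rw [← Real.rpow_add hn₀, add_neg_cancel, Real.rpow_zero, mul_one]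

end QuantizationError

theorem finite_upper_quantization_coefficient_case_i_general
    (q N : ℕ)
    (f : Fin N → EuclideanSpace ℝ (Fin q) → EuclideanSpace ℝ (Fin q))
    (s : Fin N → ℝ) (hs : ∀ i, s i ∈ Set.Ioo (0 : ℝ) 1)
    (hsim : ∀ i x y, dist (f i x) (f i y) = s i * dist x y)
    (t : Fin N → ℝ) (ht : ∀ i, 0 < t i) (htsum : ∑ i, t i = 1)
    (ν : Measure (EuclideanSpace ℝ (Fin q))) [IsProbabilityMeasure ν]
    (hν : ν = ∑ i, ENNReal.ofReal (t i) • ν.map (f i))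
    (p0 : ℝ) (p : Fin N → ℝ) (hp0 : 0 < p0) (hp : ∀ i, 0 < p i)
    (hpsum : p0 + ∑ i, p i = 1)
    (μ : Measure (EuclideanSpace ℝ (Fin q))) [IsProbabilityMeasure μ]
    (hμ : μ = ENNReal.ofReal p0 • ν + ∑ i, ENNReal.ofReal (p i) • μ.map (f i))
    (r : ℝ) (hr : 0 < r)
    (ξ1 ξ2 : ℝ) (hξ1 : 0 < ξ1) (hξ1eq : ∑ i, (t i * s i ^ r) ^ (ξ1 / (ξ1 + r)) = 1)
    (hξ2eq : ∑ i, (p i * s i ^ r) ^ (ξ2 / (ξ2 + r)) = 1)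
    (hlt : ξ1 < ξ2)
    :
    Filter.limsup (fun n : ℕ =>
        ENNReal.ofReal ((n : ℝ) ^ (r / max ξ1 ξ2) * quantErr μ r n ^ r)) Filter.atTop
      < ⊤ := by
  have hκ₁ : 0 < ξ1 / (ξ1 + r) := by positivity
  have hκ₁₂ : ξ1 / (ξ1 + r) < ξ2 / (ξ2 + r) := by
    rw [div_lt_div_iff₀ (by positivity) (by linarith)]
    nlinarith
  have hs' : ∀ i, s i ∈ Ico (0 : ℝ) 1 := fun i => Ioo_subset_Ico_self (hs i)
  have hν' : ν = 0 + ∑ i, ENNReal.ofReal (t i) • ν.map (f i) := by rwa [zero_add]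
  have hpsum' : ∑ i, p i ≤ 1 := by linarith
  have hsuppν := eventually_measure_compl_closedBall_eq_zero_of_selfSimilar hν' htsum.le
    (fun i => (ht i).le) hsim hs' (a := 0) (by simp)
  have hsuppμ := eventually_measure_compl_closedBall_eq_zero_of_selfSimilar hμ hpsum'
    (fun i => (hp i).le) hsim hs' (a := 0) (by filter_upwards [hsuppν] with R hR; simp [hR])
  obtain ⟨R, hRν, hRμ⟩ := (hsuppν.and hsuppμ).exists
  have hcodeν : HasCodebookBounds ν r (ξ1 / (ξ1 + r)) (1 - ξ1 / (ξ1 + r)) :=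
    (hasCodebookBounds_zero 0 r 1).of_selfSimilar hν' hsim (fun i => (hs i).1) ht hr.le
      (mul_rpow_lt_one hs' hr (fun i => (ht i).le) htsum.le) hξ1eq hκ₁ (by linarith)
      (distortion_singleton_ne_top hr.le hRν)
  have hcodeμ : HasCodebookBounds μ r (ξ2 / (ξ2 + r)) (1 - ξ2 / (ξ2 + r)) :=
    (hcodeν.smul hp0.le).of_selfSimilar hμ hsim (fun i => (hs i).1) hp hr.le
      (mul_rpow_lt_one hs' hr (fun i => (hp i).le) hpsum') hξ2eq hκ₁₂ (by linarith)
      (distortion_singleton_ne_top hr.le hRμ)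
  have hexp : r / max ξ1 ξ2 = (1 - ξ2 / (ξ2 + r)) / (ξ2 / (ξ2 + r)) := by
    have hξ2 : 0 < ξ2 := hξ1.trans hlt
    have hξ2r : 0 < ξ2 + r := by positivity
    rw [max_eq_right hlt.le]
    field_simp
    ring
  rw [hexp]
  exact limsup_rpow_mul_quantErr_rpow_lt_top hr (hκ₁.trans hκ₁₂) hcodeμ

theorem finite_upper_quantization_coefficient_case_i
    (q N : ℕ) (hN : 2 ≤ N)
    (f : Fin N → EuclideanSpace ℝ (Fin q) → EuclideanSpace ℝ (Fin q))
    (s : Fin N → ℝ) (hs : ∀ i, s i ∈ Set.Ioo (0 : ℝ) 1)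
    (hsim : ∀ i x y, dist (f i x) (f i y) = s i * dist x y)
    (hOSC : ∃ U : Set (EuclideanSpace ℝ (Fin q)), U.Nonempty ∧ IsOpen U ∧
      Bornology.IsBounded U ∧ (∀ i j, i ≠ j → Disjoint (f i '' U) (f j '' U)) ∧
      (⋃ i, f i '' U) ⊆ U)
    (E : Set (EuclideanSpace ℝ (Fin q))) (hEc : IsCompact E) (hEne : E.Nonempty)
    (hE : E = ⋃ i, f i '' E) (hdiam : Metric.diam E = 1)
    (t : Fin N → ℝ) (ht : ∀ i, 0 < t i) (htsum : ∑ i, t i = 1)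
    (ν : Measure (EuclideanSpace ℝ (Fin q))) [IsProbabilityMeasure ν]
    (hν : ν = ∑ i, ENNReal.ofReal (t i) • ν.map (f i))
    (p0 : ℝ) (p : Fin N → ℝ) (hp0 : 0 < p0) (hp : ∀ i, 0 < p i)
    (hpsum : p0 + ∑ i, p i = 1)
    (μ : Measure (EuclideanSpace ℝ (Fin q))) [IsProbabilityMeasure μ]
    (hμ : μ = ENNReal.ofReal p0 • ν + ∑ i, ENNReal.ofReal (p i) • μ.map (f i))
    (r : ℝ) (hr : 0 < r)
    (ξ1 ξ2 : ℝ) (hξ1 : 0 < ξ1) (hξ1eq : ∑ i, (t i * s i ^ r) ^ (ξ1 / (ξ1 + r)) = 1)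
    (hξ2 : 0 < ξ2) (hξ2eq : ∑ i, (p i * s i ^ r) ^ (ξ2 / (ξ2 + r)) = 1)
    (hlt : ξ1 < ξ2)
    :
    Filter.limsup (fun n : ℕ =>
        ENNReal.ofReal ((n : ℝ) ^ (r / max ξ1 ξ2) * quantErr μ r n ^ r)) Filter.atTop
      < ⊤ :=
  finite_upper_quantization_coefficient_case_i_general q N f s hs hsim t ht htsum ν hν p0 p hp0 hp
    hpsum μ hμ r hr ξ1 ξ2 hξ1 hξ1eq hξ2eq hlt
end

section
/- For every r > 0 let ξ_{2,r} be the unique positive number with ∑_{i=1}^N (p_i s_i^r)^{ξ_{2,r}/(ξ_{2,r}+r)} = 1. Then ξ_{2,r} → 0 as r → 0⁺. (This follows from the Hölder bound ∑_{i=1}^N (p_i s_i^r)^{t/(t+r)} ≤ (∑_{i=1}^N p_i)^{t/(t+r)} · (∑_{i=1}^N s_i^t)^{r/(t+r)} for every t > 0, whose right-hand side tends to ∑_{i=1}^N p_i < 1 as r → 0.) -/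
open Filter

/-- If `∑ p_i < 1`, then the solution `ξ_{2,r}` of `∑ (p_i s_i^r)^{ξ/(ξ+r)} = 1`
tends to `0` as `r → 0⁺`. -/
theorem xi_two_tendsto_zero
    (N : ℕ) (hN : 2 ≤ N)
    (p : Fin N → ℝ) (hp : ∀ i, 0 < p i) (hpsum : ∑ i, p i < 1)
    (s : Fin N → ℝ) (hs : ∀ i, s i ∈ Set.Ioo (0 : ℝ) 1)
    (ξ2 : ℝ → ℝ)
    (hξ2 : ∀ r : ℝ, 0 < r → 0 < ξ2 r ∧
      ∑ i, (p i * s i ^ r) ^ (ξ2 r / (ξ2 r + r)) = 1) :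
    Filter.Tendsto ξ2 (nhdsWithin 0 (Set.Ioi 0)) (nhds 0) := by
  have hplt1 : ∀ i, p i < 1 := by
    intro i
    have : p i ≤ ∑ j, p j :=
      Finset.single_le_sum (fun j _ => (hp j).le) (Finset.mem_univ i)
    linarith
  rw [tendsto_order]
  constructor
  · intro a ha
    filter_upwards [self_mem_nhdsWithin] with r hr
    exact lt_trans ha (hξ2 r hr).1
  · intro ε hε
    -- key: ∑ (p i * s i ^ r) ^ (ε/(ε+r)) → ∑ p i as r → 0⁺
    have key : Tendsto (fun r : ℝ => ∑ i, (p i * s i ^ r) ^ (ε / (ε + r)))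
        (nhdsWithin 0 (Set.Ioi 0)) (nhds (∑ i, p i)) := by
      have h1 : Tendsto (fun r : ℝ => ∑ i, (p i * s i ^ r) ^ (ε / (ε + r)))
          (nhds 0) (nhds (∑ i, p i)) := by
        apply tendsto_finset_sum
        intro i _
        have hbase : ContinuousAt (fun r : ℝ => p i * s i ^ r) 0 :=
          continuousAt_const.mul
            (ContinuousAt.rpow continuousAt_const continuousAt_id
              (Or.inl (ne_of_gt (hs i).1)))
        have hexp : ContinuousAt (fun r : ℝ => ε / (ε + r)) 0 := by
          apply ContinuousAt.div continuousAt_const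
            (continuousAt_const.add continuousAt_id)
          simp [ne_of_gt hε]
        have hc : ContinuousAt (fun r : ℝ => (p i * s i ^ r) ^ (ε / (ε + r))) 0 :=
          ContinuousAt.rpow hbase hexp
            (Or.inl (by
              simp only [Real.rpow_zero, mul_one]
              exact ne_of_gt (hp i)))
        have := hc.tendsto
        simpa [Real.rpow_zero, ne_of_gt hε] using this
      exact h1.mono_left nhdsWithin_le_nhds
    have hev : ∀ᶠ r in nhdsWithin 0 (Set.Ioi 0),
        ∑ i, (p i * s i ^ r) ^ (ε / (ε + r)) < 1 :=
      key.eventually_lt_const hpsum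
    filter_upwards [hev, self_mem_nhdsWithin] with r hlt hr
    simp only [Set.mem_Ioi] at hr
    by_contra hcon
    push_neg at hcon
    obtain ⟨hξpos, hξeq⟩ := hξ2 r hr
    -- exponent comparison: ε/(ε+r) ≤ ξ/(ξ+r)
    have hexple : ε / (ε + r) ≤ ξ2 r / (ξ2 r + r) := by
      rw [div_le_div_iff₀ (by linarith) (by linarith)]
      nlinarith
    have hterm : ∀ i, (p i * s i ^ r) ^ (ξ2 r / (ξ2 r + r))
        ≤ (p i * s i ^ r) ^ (ε / (ε + r)) := by
      intro i
      apply Real.rpow_le_rpow_of_exponent_ge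
      · exact mul_pos (hp i) (Real.rpow_pos_of_pos (hs i).1 r)
      · have h1 : s i ^ r ≤ 1 :=
          Real.rpow_le_one (hs i).1.le (hs i).2.le hr.le
        nlinarith [hp i, hplt1 i]
      · exact hexple
    have : (1 : ℝ) ≤ ∑ i, (p i * s i ^ r) ^ (ε / (ε + r)) := by
      rw [← hξeq]
      exact Finset.sum_le_sum fun i _ => hterm i
    linarith
end

section
/- lim_{r→∞} ( (r/ξ_{1,r})·log 2 − r·log 8 ) = (1/2)(log 9 − log 8); equivalently, 2^{−r/ξ_{1,r}} · 8^{r} → (8/9)^{1/2} as r → ∞. -/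
/-!
Put `θ = ξ/(ξ + r)`, so that `r/ξ = 1/θ - 1`. Splitting off the factor `8^{-rθ}`, the defining
equation becomes `φ(θ) = θ·r·log 8` for `φ(x) = log((1/3)^x + (2/3)^x)`. Since `φ ≤ log 2` on
`[0, ∞)`, this forces `θ ≤ log 2/(r log 8) → 0`, and then
`(r/ξ)·log 2 - r·log 8 = -(φ(θ) - φ(0))/θ - log 2 → -φ'(0) - log 2`, where
`φ'(0) = (log(1/3) + log(2/3))/2`.
-/

open Filter Real Topology

lemma hasDerivAt_log_rpow_add_rpow_zero {a b : ℝ} (ha : 0 < a) (hb : 0 < b) :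
    HasDerivAt (fun x : ℝ => log (a ^ x + b ^ x)) ((log a + log b) / 2) 0 := by
  have h := ((hasStrictDerivAt_const_rpow ha 0).hasDerivAt.add
    (hasStrictDerivAt_const_rpow hb 0).hasDerivAt).log (by norm_num)
  simpa only [Pi.add_apply, rpow_zero, one_mul, one_add_one_eq_two] using h

lemma log_rpow_add_rpow_of_mul_rpow_add_eq_one {a b c θ : ℝ} (ha : 0 ≤ a) (hb : 0 ≤ b)
    (hc : 0 < c) (h : (a * c) ^ θ + (b * c) ^ θ = 1) :
    log (a ^ θ + b ^ θ) = -(θ * log c) := by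
  rw [mul_rpow ha hc.le, mul_rpow hb hc.le, ← add_mul] at h
  rw [eq_inv_of_mul_eq_one_left h, ← rpow_neg hc.le, log_rpow hc]
  ring

lemma log_rpow_add_rpow_le_log_two {a b θ : ℝ} (ha₀ : 0 < a) (ha₁ : a ≤ 1) (hb₀ : 0 < b)
    (hb₁ : b ≤ 1) (hθ : 0 ≤ θ) : log (a ^ θ + b ^ θ) ≤ log 2 := by
  have := rpow_le_one ha₀.le ha₁ hθ
  have := rpow_le_one hb₀.le hb₁ hθ
  exact log_le_log (by positivity) (by linarith)

lemma tendsto_nhdsGT_zero_of_mul_le {θ : ℝ → ℝ} {C : ℝ} (hpos : ∀ᶠ r in atTop, 0 < θ r)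
    (hle : ∀ᶠ r in atTop, θ r * r ≤ C) : Tendsto θ atTop (𝓝[>] 0) := by
  refine tendsto_nhdsWithin_iff.mpr ⟨?_, hpos⟩
  refine squeeze_zero' (hpos.mono fun r hr => hr.le) ?_
    ((tendsto_const_nhds (x := C)).div_atTop tendsto_id)
  filter_upwards [hle, eventually_gt_atTop 0] with r hr hr₀
  exact (le_div_iff₀ hr₀).mpr hr

theorem tendsto_div_mul_log_two_sub_mul_log {a b B : ℝ} (ha₀ : 0 < a) (ha₁ : a ≤ 1)
    (hb₀ : 0 < b) (hb₁ : b ≤ 1) (hB : 1 < B) (ξ : ℝ → ℝ)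
    (hξ : ∀ r : ℝ, 0 < r → 0 < ξ r ∧
      (a * B ^ (-r)) ^ (ξ r / (ξ r + r)) + (b * B ^ (-r)) ^ (ξ r / (ξ r + r)) = 1) :
    Tendsto (fun r => r / ξ r * log 2 - r * log B) atTop
      (𝓝 (-((log a + log b) / 2) - log 2)) := by
  set θ : ℝ → ℝ := fun r => ξ r / (ξ r + r)
  have hθ_pos : ∀ r, 0 < r → 0 < θ r := fun r hr =>
    div_pos (hξ r hr).1 (by linarith [(hξ r hr).1])
  have hlog_eq : ∀ r, 0 < r → log (a ^ θ r + b ^ θ r) = θ r * r * log B := fun r hr => by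
    rw [log_rpow_add_rpow_of_mul_rpow_add_eq_one ha₀.le hb₀.le (by positivity) (hξ r hr).2,
      log_rpow (by linarith)]
    ring
  have hθ_lim : Tendsto θ atTop (𝓝[>] 0) := by
    refine tendsto_nhdsGT_zero_of_mul_le (C := log 2 / log B)
      (eventually_gt_atTop 0 |>.mono hθ_pos) ?_
    filter_upwards [eventually_gt_atTop 0] with r hr
    rw [le_div_iff₀ (log_pos hB), ← hlog_eq r hr]
    exact log_rpow_add_rpow_le_log_two ha₀ ha₁ hb₀ hb₁ (hθ_pos r hr).le
  have hslope := ((hasDerivAt_log_rpow_add_rpow_zero ha₀ hb₀).tendsto_slope_zero_right.comp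
    hθ_lim).neg.sub_const (log 2)
  refine hslope.congr' ?_
  filter_upwards [eventually_gt_atTop 0] with r hr
  have hξr : 0 < ξ r := (hξ r hr).1
  simp only [Function.comp_apply, zero_add, smul_eq_mul, rpow_zero, one_add_one_eq_two]
  rw [hlog_eq r hr]
  simp only [θ]
  field_simp
  ring

/-- For `t₁ = 1/3`, `t₂ = 2/3`, `s₁ = s₂ = 1/8`:
`(r/ξ_{1,r})·log 2 − r·log 8 → (1/2)(log 9 − log 8)` as `r → ∞`. -/
theorem xi_one_limit
    (ξ1 : ℝ → ℝ)
    (hξ1 : ∀ r : ℝ, 0 < r → 0 < ξ1 r ∧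
      ((1 / 3 : ℝ) * (8 : ℝ) ^ (-r)) ^ (ξ1 r / (ξ1 r + r)) +
        ((2 / 3 : ℝ) * (8 : ℝ) ^ (-r)) ^ (ξ1 r / (ξ1 r + r)) = 1) :
    Filter.Tendsto (fun r : ℝ => r / ξ1 r * Real.log 2 - r * Real.log 8)
      Filter.atTop (nhds ((1 / 2) * (Real.log 9 - Real.log 8))) := by
  have hlim := tendsto_div_mul_log_two_sub_mul_log (by norm_num) (by norm_num) (by norm_num)
    (by norm_num) (by norm_num) ξ1 hξ1
  convert hlim using 2
  have h9 : log 9 = 2 * log 3 := by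
    rw [show (9 : ℝ) = 3 ^ 2 by norm_num, log_pow]; norm_num
  have h8 : log 8 = 3 * log 2 := by
    rw [show (8 : ℝ) = 2 ^ 3 by norm_num, log_pow]; norm_num
  rw [h9, h8, log_div one_ne_zero (by norm_num), log_div two_ne_zero (by norm_num), log_one]
  ring
end

section
/- If 0 < p₀ < 1 − (8/9)^{1/2}, then for all sufficiently large r one has ξ_{1,r} < ξ_{2,r}; equivalently, for all sufficiently large r, 2·((1−p₀)/2 · 8^{−r})^{ξ_{1,r}/(ξ_{1,r}+r)} > 1. -/
open Filter Real

set_option maxHeartbeats 2000000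

lemma exp_quad_aux {x : ℝ} (hx : |x| ≤ 1) : Real.exp x ≤ 1 + x + (3/4) * x ^ 2 := by
  have h := Real.exp_bound hx (n := 2) (by norm_num)
  have hs : ∑ m ∈ Finset.range 2, x ^ m / m.factorial = 1 + x := by
    simp [Finset.sum_range_succ]
  rw [hs] at h
  have h2 : |x| ^ 2 = x ^ 2 := sq_abs x
  norm_num [Nat.factorial] at h
  have := abs_le.mp h
  nlinarith [this.2]

lemma core_ineq (p0 α δ : ℝ) (h1 : (0:ℝ) < 1 - p0)
    (hδ : Real.log (1 - p0) = δ + Real.log (8/9) / 2)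
    (hδpos : 0 < δ) (hα : 0 < α) (hα1 : α ≤ 1) (hαδ : α ≤ δ) :
    (2/3 : ℝ) ^ α + (4/3 : ℝ) ^ α < 2 * (1 - p0) ^ α := by
  have e1 : Real.log (8/9 : ℝ) = Real.log (2/3 : ℝ) + Real.log (4/3 : ℝ) := by
    rw [← Real.log_mul (by norm_num) (by norm_num)]; norm_num
  have e2 : Real.log (4/3 : ℝ) = Real.log (2/3 : ℝ) + Real.log 2 := by
    rw [← Real.log_mul (by norm_num) (by norm_num)]; norm_num
  set x : ℝ := Real.log 2 / 2 * α with hxdef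
  set m : ℝ := Real.log (8/9 : ℝ) / 2 * α with hmdef
  have hlog2_pos : (0:ℝ) < Real.log 2 := Real.log_pos (by norm_num)
  have hlog2_lt : Real.log 2 < 1 := by
    have := Real.log_two_lt_d9; linarith
  have hxpos : 0 < x := by positivity
  have hxle : |x| ≤ 1 := by
    rw [abs_of_pos hxpos]
    nlinarith
  have hu : (2/3 : ℝ) ^ α = Real.exp (m - x) := by
    rw [Real.rpow_def_of_pos (by norm_num)]
    congr 1
    rw [hmdef, hxdef, e1, e2]; ring
  have hv : (4/3 : ℝ) ^ α = Real.exp (m + x) := by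
    rw [Real.rpow_def_of_pos (by norm_num)]
    congr 1
    rw [hmdef, hxdef, e1, e2]; ring
  have hw : (1 - p0 : ℝ) ^ α = Real.exp (m + δ * α) := by
    rw [Real.rpow_def_of_pos h1]
    congr 1
    rw [hδ, hmdef]; ring
  rw [hu, hv, hw, Real.exp_sub, Real.exp_add, Real.exp_add]
  have hem : 0 < Real.exp m := Real.exp_pos m
  rw [Real.exp_sub] at *
  have b1 : Real.exp x ≤ 1 + x + (3/4) * x ^ 2 := exp_quad_aux hxle
  have b2 : Real.exp (-x) ≤ 1 + (-x) + (3/4) * (-x) ^ 2 := exp_quad_aux (by rwa [abs_neg])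
  have b3 : 1 + δ * α ≤ Real.exp (δ * α) := by linarith [Real.add_one_le_exp (δ * α)]
  have key : Real.exp x + Real.exp (-x) < 2 * Real.exp (δ * α) := by
    have hx2 : x ^ 2 = (Real.log 2 / 2) ^ 2 * α ^ 2 := by rw [hxdef]; ring
    have hl : (Real.log 2) ^ 2 ≤ 1 := by nlinarith
    have hl2 : (Real.log 2) ^ 2 * α ^ 2 ≤ 1 * α ^ 2 :=
      mul_le_mul_of_nonneg_right hl (sq_nonneg α)
    have hx2b : x ^ 2 ≤ α ^ 2 / 4 := by nlinarith
    have hαα : α ^ 2 ≤ α * δ := by nlinarith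
    have hfin : 3 / 2 * x ^ 2 < 2 * (δ * α) := by nlinarith [mul_pos hδpos hα]
    nlinarith
  have : Real.exp m * Real.exp x + Real.exp m * Real.exp (-x) <
      Real.exp m * (2 * Real.exp (δ * α)) := by
    rw [← mul_add]
    exact (mul_lt_mul_iff_right₀ hem).mpr key
  calc Real.exp m / Real.exp x + Real.exp m * Real.exp x
      = Real.exp m * Real.exp (-x) + Real.exp m * Real.exp x := by
        rw [Real.exp_neg]; ring
    _ < Real.exp m * (2 * Real.exp (δ * α)) := by linarith
    _ = 2 * (Real.exp m * Real.exp (δ * α)) := by ring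

/-- If `0 < p₀ < 1 − (8/9)^{1/2}`, then `ξ_{1,r} < ξ_{2,r}` for all sufficiently
large `r`. -/
theorem xi_one_lt_xi_two_eventually
    (p0 : ℝ) (hp0 : 0 < p0) (hp0' : p0 < 1 - Real.sqrt (8 / 9))
    (ξ1 ξ2 : ℝ → ℝ)
    (hξ1 : ∀ r : ℝ, 0 < r → 0 < ξ1 r ∧
      ((1 / 3 : ℝ) * (8 : ℝ) ^ (-r)) ^ (ξ1 r / (ξ1 r + r)) +
        ((2 / 3 : ℝ) * (8 : ℝ) ^ (-r)) ^ (ξ1 r / (ξ1 r + r)) = 1)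
    (hξ2 : ∀ r : ℝ, 0 < r → 0 < ξ2 r ∧
      2 * ((1 - p0) / 2 * (8 : ℝ) ^ (-r)) ^ (ξ2 r / (ξ2 r + r)) = 1) :
    ∀ᶠ r in Filter.atTop, ξ1 r < ξ2 r := by
  -- Basic facts
  have hsq : Real.sqrt (8/9 : ℝ) > 0 := Real.sqrt_pos.mpr (by norm_num)
  have h1p : (0:ℝ) < 1 - p0 := by
    have := Real.sqrt_nonneg (8/9 : ℝ); linarith
  set δ : ℝ := Real.log (1 - p0) - Real.log (8/9) / 2 with hδdef
  have hδpos : 0 < δ := by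
    have hlt : Real.sqrt (8/9 : ℝ) < 1 - p0 := by linarith
    have := Real.log_lt_log hsq hlt
    rw [Real.log_sqrt (by norm_num)] at this
    simp only [hδdef]; linarith
  have hlog8 : (0:ℝ) < Real.log 8 := Real.log_pos (by norm_num)
  have hlog2 : (0:ℝ) < Real.log 2 := Real.log_pos (by norm_num)
  -- choose threshold
  filter_upwards [eventually_ge_atTop (max 1 (Real.log 2 / (δ * Real.log 8)))] with r hr
  have hr1 : (1:ℝ) ≤ r := le_trans (le_max_left _ _) hr
  have hrpos : (0:ℝ) < r := by linarith
  obtain ⟨hξ1pos, hE1⟩ := hξ1 r hrpos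
  obtain ⟨hξ2pos, hE2⟩ := hξ2 r hrpos
  set a := ξ1 r
  set c := ξ2 r
  set α := a / (a + r) with hαdef
  set β := c / (c + r) with hβdef
  have har : 0 < a + r := by positivity
  have hcr : 0 < c + r := by positivity
  have hαpos : 0 < α := div_pos hξ1pos har
  have hα1 : α < 1 := (div_lt_one har).mpr (by linarith)
  have h8r : (0:ℝ) < (8:ℝ) ^ (-r) := Real.rpow_pos_of_pos (by norm_num) _
  have h8r1 : (8:ℝ) ^ (-r) < 1 :=
    Real.rpow_lt_one_of_one_lt_of_neg (by norm_num) (by linarith)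
  -- bound: α * r * log 8 ≤ log 2
  have hB : (0:ℝ) < (2/3 : ℝ) * (8:ℝ) ^ (-r) := by positivity
  have hhalf : (1/2 : ℝ) ≤ ((2/3 : ℝ) * (8:ℝ) ^ (-r)) ^ α := by
    have hle : ((1/3 : ℝ) * (8:ℝ) ^ (-r)) ^ α ≤ ((2/3 : ℝ) * (8:ℝ) ^ (-r)) ^ α := by
      apply Real.rpow_le_rpow (by positivity) _ hαpos.le
      nlinarith
    nlinarith [hE1]
  have hαbound : α * (r * Real.log 8) ≤ Real.log 2 := by
    have hlogB : Real.log ((2/3 : ℝ) * (8:ℝ) ^ (-r)) =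
        Real.log (2/3 : ℝ) + (-r) * Real.log 8 := by
      rw [Real.log_mul (by norm_num) (ne_of_gt h8r), Real.log_rpow (by norm_num)]
    have h := Real.log_le_log (by norm_num) hhalf
    rw [Real.log_rpow hB, hlogB] at h
    have hlog12 : Real.log (1/2 : ℝ) = -Real.log 2 := by
      rw [one_div, Real.log_inv]
    rw [hlog12] at h
    have hlog23 : Real.log (2/3 : ℝ) < 0 := Real.log_neg (by norm_num) (by norm_num)
    nlinarith
  have hαδ : α ≤ δ := by
    have hr2 : Real.log 2 / (δ * Real.log 8) ≤ r := le_trans (le_max_right _ _) hr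
    have hd8 : 0 < δ * Real.log 8 := by positivity
    have : Real.log 2 ≤ r * (δ * Real.log 8) := (div_le_iff₀ hd8).mp hr2
    have hr8 : 0 < r * Real.log 8 := by positivity
    nlinarith
  -- core inequality
  have hcore : (2/3 : ℝ) ^ α + (4/3 : ℝ) ^ α < 2 * (1 - p0) ^ α :=
    core_ineq p0 α δ h1p (by rw [hδdef]; ring) hδpos hαpos hα1.le hαδ
  -- translate to goal with base factor q = 8^{-r}/2
  set q : ℝ := (8:ℝ) ^ (-r) / 2 with hqdef
  have hqpos : 0 < q := by positivity
  have hqα : 0 < q ^ α := Real.rpow_pos_of_pos hqpos _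
  have hfac1 : ((1/3 : ℝ) * (8:ℝ) ^ (-r)) ^ α = (2/3 : ℝ) ^ α * q ^ α := by
    rw [← Real.mul_rpow (by norm_num) hqpos.le]
    congr 1; rw [hqdef]; ring
  have hfac2 : ((2/3 : ℝ) * (8:ℝ) ^ (-r)) ^ α = (4/3 : ℝ) ^ α * q ^ α := by
    rw [← Real.mul_rpow (by norm_num) hqpos.le]
    congr 1; rw [hqdef]; ring
  have hfac3 : ((1 - p0) / 2 * (8:ℝ) ^ (-r)) ^ α = (1 - p0) ^ α * q ^ α := by
    rw [← Real.mul_rpow h1p.le hqpos.le]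
    congr 1; rw [hqdef]; ring
  have hgoal : 1 < 2 * ((1 - p0) / 2 * (8:ℝ) ^ (-r)) ^ α := by
    rw [hfac3]
    calc (1:ℝ) = ((1/3 : ℝ) * (8:ℝ) ^ (-r)) ^ α + ((2/3 : ℝ) * (8:ℝ) ^ (-r)) ^ α :=
          hE1.symm
      _ = ((2/3 : ℝ) ^ α + (4/3 : ℝ) ^ α) * q ^ α := by rw [hfac1, hfac2]; ring
      _ < (2 * (1 - p0) ^ α) * q ^ α := mul_lt_mul_of_pos_right hcore hqα
      _ = 2 * ((1 - p0) ^ α * q ^ α) := by ring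
  -- deduce α < β
  have hb : (0:ℝ) < (1 - p0) / 2 * (8:ℝ) ^ (-r) := by positivity
  have hb1 : (1 - p0) / 2 * (8:ℝ) ^ (-r) < 1 := by nlinarith
  have hαβ : α < β := by
    have hlt : ((1 - p0) / 2 * (8:ℝ) ^ (-r)) ^ β <
        ((1 - p0) / 2 * (8:ℝ) ^ (-r)) ^ α := by nlinarith [hE2, hgoal]
    exact (Real.rpow_lt_rpow_left_iff_of_base_lt_one hb hb1).mp hlt
  -- conclude a < c
  rw [hαdef, hβdef, div_lt_div_iff₀ har hcr] at hαβ
  nlinarith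
end

section
/- If 0 < p₀ < 1 − (8/9)^{1/2}, then there exists r > 0 with ξ_{1,r} = ξ_{2,r}. -/
/-!
With `β₁ = ξ₁/(ξ₁+r)`, `β₂ = ξ₂/(ξ₂+r)` (increasing in `ξ`) and `q = 8^{-r}`, the map
`β ↦ (q/3)^β + (2q/3)^β` is decreasing and equals `((1/3)^β₂ + (2/3)^β₂) / (2 p₁^β₂)` at `β₂`,
so `ξ₂ < ξ₁` exactly when `2 p₁^β₂ < (1/3)^β₂ + (2/3)^β₂`. As `r` runs over `(0, ∞)`, `β₂` takes
every value `β > 0` with `2 p₁^β > 1`. Near the end of that range, where `2 p₁^β = 1` with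
`β < 1`, the right-hand side wins because `1/3 + 2/3 = 1`; near `β = 0` the left-hand side wins,
since both sides equal `2` there and the derivatives compare as `log (2/9) < 2 log p₁`, which is
the hypothesis on `p₀`. The intermediate value theorem then yields a crossing.
-/

open Filter Real Topology

theorem div_add_lt_div_add_iff {r x y : ℝ} (hr : 0 < r) (hx : 0 < x + r) (hy : 0 < y + r) :
    x / (x + r) < y / (y + r) ↔ x < y := by
  rw [div_lt_div_iff₀ hx hy]
  constructor <;> intro h <;> nlinarith

theorem eventually_nhdsGT_neg_of_hasDerivAt {f : ℝ → ℝ} {f' x : ℝ} (hf : HasDerivAt f f' x)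
    (hfx : f x = 0) (hf' : f' < 0) : ∀ᶠ y in 𝓝[>] x, f y < 0 := by
  have hslope : ∀ᶠ y in 𝓝[>] x, slope f x y < 0 :=
    ((hasDerivAt_iff_tendsto_slope.1 hf).mono_left (nhdsGT_le_nhdsNE x)).eventually
      (eventually_lt_nhds hf')
  filter_upwards [hslope, self_mem_nhdsWithin] with y hy hxy
  rw [slope_def_field, hfx, sub_zero] at hy
  exact neg_of_div_neg_left hy (sub_pos.2 hxy).le

theorem lt_iff_two_mul_rpow_lt_rpow_add_rpow {a b p q β₁ β₂ : ℝ} (ha : 0 < a) (hb : 0 < b)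
    (hp : 0 < p) (hq : 0 < q) (haq : a * q < 1) (hbq : b * q < 1)
    (h₁ : (a * q) ^ β₁ + (b * q) ^ β₁ = 1) (h₂ : 2 * (p * q) ^ β₂ = 1) :
    β₂ < β₁ ↔ 2 * p ^ β₂ < a ^ β₂ + b ^ β₂ := by
  have hsum : (a * q) ^ β₂ + (b * q) ^ β₂ = (a ^ β₂ + b ^ β₂) / (2 * p ^ β₂) := by
    rw [mul_rpow hp.le hq.le] at h₂
    rw [mul_rpow ha.le hq.le, mul_rpow hb.le hq.le, eq_div_iff (by positivity)]
    linear_combination (a ^ β₂ + b ^ β₂) * h₂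
  have hanti : StrictAnti fun β : ℝ => (a * q) ^ β + (b * q) ^ β :=
    (strictAnti_rpow_of_base_lt_one (by positivity) haq).add
      (strictAnti_rpow_of_base_lt_one (by positivity) hbq)
  rw [← hanti.lt_iff_gt, h₁, hsum, one_lt_div (by positivity)]

theorem exists_pos_div_add_eq {p c β : ℝ} {ξ : ℝ → ℝ} (hp : 0 < p) (hc : 1 < c)
    (hξ : ∀ r, 0 < r → 2 * (p * c ^ (-r)) ^ (ξ r / (ξ r + r)) = 1) (hβ : 0 < β)
    (hpβ : 1 < 2 * p ^ β) : ∃ r, 0 < r ∧ ξ r / (ξ r + r) = β := by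
  obtain ⟨r, hr, hrβ⟩ : ∃ r, 0 < r ∧ -r * β = -logb c (2 * p ^ β) :=
    ⟨logb c (2 * p ^ β) / β, div_pos (logb_pos hc hpβ) hβ, by field_simp⟩
  have hβ_sol : 2 * (p * c ^ (-r)) ^ β = 1 := by
    rw [mul_rpow hp.le (by positivity), ← rpow_mul (by positivity), hrβ,
      rpow_neg (by positivity), rpow_logb (by positivity) hc.ne' (by positivity)]
    field_simp
  have hbase : 0 < p * c ^ (-r) := by positivity
  have hbase_ne : p * c ^ (-r) ≠ 1 := by
    intro h
    rw [h, one_rpow] at hβ_sol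
    norm_num at hβ_sol
  refine ⟨r, hr, (rpow_right_inj hbase hbase_ne).1 ?_⟩
  linarith [hξ r hr]

theorem exists_two_mul_rpow_lt_rpow_add_rpow {a b p : ℝ} (ha : 0 < a) (hb : 0 < b)
    (hab : a + b = 1) (hp : 0 < p) (hp_half : p < 1 / 2) :
    ∃ β : ℝ, 0 < β ∧ 1 < 2 * p ^ β ∧ 2 * p ^ β < a ^ β + b ^ β := by
  have hp_one : p < 1 := by linarith
  set β₀ := logb p (1 / 2)
  have hpβ₀ : p ^ β₀ = 1 / 2 := rpow_logb hp hp_one.ne (by norm_num)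
  have hβ₀ : 0 < β₀ := logb_pos_of_base_lt_one hp hp_one (by norm_num) (by norm_num)
  have hβ₀_one : β₀ < 1 := by
    rwa [logb_lt_iff_lt_rpow_of_base_lt_one hp hp_one (by norm_num), rpow_one]
  have hgap : 2 * p ^ β₀ < a ^ β₀ + b ^ β₀ := by
    have ha' := rpow_lt_rpow_of_exponent_gt ha (by linarith) hβ₀_one
    have hb' := rpow_lt_rpow_of_exponent_gt hb (by linarith) hβ₀_one
    rw [rpow_one] at ha' hb'
    linarith
  have hcont : ∀ᶠ β in 𝓝 β₀, 2 * p ^ β < a ^ β + b ^ β :=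
    ContinuousAt.eventually_lt (by fun_prop (disch := positivity))
      (by fun_prop (disch := positivity)) hgap
  obtain ⟨β, hβ, hβ_mem⟩ :=
    ((hcont.filter_mono nhdsWithin_le_nhds).and (Ioo_mem_nhdsLT hβ₀)).exists
  refine ⟨β, hβ_mem.1, ?_, hβ⟩
  linarith [strictAnti_rpow_of_base_lt_one hp hp_one hβ_mem.2]

theorem exists_rpow_add_rpow_lt_two_mul_rpow {a b p : ℝ} (ha : 0 < a) (hb : 0 < b)
    (hp : 0 < p) (habp : a * b < p ^ 2) :
    ∃ β : ℝ, 0 < β ∧ 1 < 2 * p ^ β ∧ a ^ β + b ^ β < 2 * p ^ β := by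
  have hderiv : HasDerivAt (fun β : ℝ => a ^ β + b ^ β - 2 * p ^ β)
      (log a + log b - 2 * log p) 0 := by
    have h := ((hasStrictDerivAt_const_rpow ha 0).hasDerivAt.add
      (hasStrictDerivAt_const_rpow hb 0).hasDerivAt).sub
      ((hasStrictDerivAt_const_rpow hp 0).hasDerivAt.const_mul 2)
    simp only [rpow_zero, one_mul] at h
    exact h
  have hslope : log a + log b - 2 * log p < 0 := by
    have := log_lt_log (by positivity) habp
    rw [log_mul ha.ne' hb.ne', log_pow] at this
    push_cast at this
    linarith
  have hneg := eventually_nhdsGT_neg_of_hasDerivAt hderiv (by norm_num) hslope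
  have hone : ∀ᶠ β in 𝓝 (0 : ℝ), 1 < 2 * p ^ β :=
    ContinuousAt.eventually_lt (by fun_prop (disch := positivity))
      (by fun_prop (disch := positivity)) (by norm_num)
  obtain ⟨β, hβ, hβ_one, hβ_pos⟩ :=
    (hneg.and ((hone.filter_mono nhdsWithin_le_nhds).and self_mem_nhdsWithin)).exists
  exact ⟨β, hβ_pos, hβ_one, sub_neg.1 hβ⟩

/-- If `0 < p₀ < 1 − (8/9)^{1/2}`, then there exists `r > 0` with
`ξ_{1,r} = ξ_{2,r}`. -/
theorem exists_xi_one_eq_xi_two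
    (p0 : ℝ) (hp0 : 0 < p0) (hp0' : p0 < 1 - Real.sqrt (8 / 9))
    (ξ1 ξ2 : ℝ → ℝ)
    (hξ1 : ∀ r : ℝ, 0 < r → 0 < ξ1 r ∧
      ((1 / 3 : ℝ) * (8 : ℝ) ^ (-r)) ^ (ξ1 r / (ξ1 r + r)) +
        ((2 / 3 : ℝ) * (8 : ℝ) ^ (-r)) ^ (ξ1 r / (ξ1 r + r)) = 1)
    (hξ2 : ∀ r : ℝ, 0 < r → 0 < ξ2 r ∧
      2 * ((1 - p0) / 2 * (8 : ℝ) ^ (-r)) ^ (ξ2 r / (ξ2 r + r)) = 1)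
    (hcont1 : ContinuousOn ξ1 (Set.Ioi 0)) (hcont2 : ContinuousOn ξ2 (Set.Ioi 0)) :
    ∃ r : ℝ, 0 < r ∧ ξ1 r = ξ2 r := by
  set p := (1 - p0) / 2 with hp_def
  have hsqrt : sqrt (8 / 9) < 2 * p := by linarith
  have hp : 0 < p := by linarith [sqrt_nonneg (8 / 9)]
  have hp_half : p < 1 / 2 := by linarith
  have hp_sq : 1 / 3 * (2 / 3) < p ^ 2 := by
    nlinarith [sq_sqrt (show (0 : ℝ) ≤ 8 / 9 by norm_num), sqrt_nonneg (8 / 9)]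
  have hcmp : ∀ r, 0 < r →
      (ξ2 r < ξ1 r ↔ 2 * p ^ (ξ2 r / (ξ2 r + r)) <
        (1 / 3 : ℝ) ^ (ξ2 r / (ξ2 r + r)) + (2 / 3 : ℝ) ^ (ξ2 r / (ξ2 r + r))) := by
    intro r hr
    obtain ⟨hx₁, h₁⟩ := hξ1 r hr
    obtain ⟨hx₂, h₂⟩ := hξ2 r hr
    have hq : (8 : ℝ) ^ (-r) < 1 := rpow_lt_one_of_one_lt_of_neg (by norm_num) (by linarith)
    rw [← div_add_lt_div_add_iff hr (by linarith) (by linarith),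
      lt_iff_two_mul_rpow_lt_rpow_add_rpow (by norm_num) (by norm_num) hp (by positivity)
        (by linarith) (by linarith) h₁ h₂]
  obtain ⟨βa, hβa, hβa_one, hβa_lt⟩ :=
    exists_rpow_add_rpow_lt_two_mul_rpow (by norm_num) (by norm_num) hp hp_sq
  obtain ⟨βb, hβb, hβb_one, hβb_lt⟩ :=
    exists_two_mul_rpow_lt_rpow_add_rpow (a := 1 / 3) (b := 2 / 3) (by norm_num) (by norm_num)
      (by norm_num) hp hp_half
  have hsol := fun r hr => (hξ2 r hr).2
  obtain ⟨ra, hra, hβa_eq⟩ := exists_pos_div_add_eq hp (by norm_num) hsol hβa hβa_one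
  obtain ⟨rb, hrb, hβb_eq⟩ := exists_pos_div_add_eq hp (by norm_num) hsol hβb hβb_one
  obtain ⟨r, hr, hr_eq⟩ := isPreconnected_Ioi.intermediate_value₂ hra hrb hcont1 hcont2
    (not_lt.1 fun h => ((hcmp ra hra).1 h).not_gt (hβa_eq ▸ hβa_lt))
    ((hcmp rb hrb).2 (hβb_eq ▸ hβb_lt)).le
  exact ⟨r, hr, hr_eq⟩
end

section
/- There exists a unique ξ > 0 such that ∑_{i=1}^N (w_i)^{ξ/(ξ+r)} = 1; moreover the function ξ ↦ ∑_{i=1}^N (w_i)^{ξ/(ξ+r)} is strictly decreasing on (0,∞). -/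
/-! The map `ξ ↦ ξ / (ξ + r)` increases strictly and continuously from `0` to `1` on `[0, ∞)`,
while `t ↦ ∑ wᵢ ^ t` decreases strictly from `N ≥ 2` at `t = 0` to `∑ wᵢ < 1` at `t = 1`.
Their composite is therefore continuous and strictly decreasing, starts above `1` and ends
below `1`, so it crosses `1` exactly once. -/

open Filter Set Topology

theorem existsUnique_gt_eq_of_strictAntiOn {f : ℝ → ℝ} {a c : ℝ}
    (hcont : ContinuousOn f (Ici a)) (hanti : StrictAntiOn f (Ioi a)) (ha : c < f a)
    (hlim : ∀ᶠ x in atTop, f x < c) : ∃! x, a < x ∧ f x = c := by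
  obtain ⟨b, hb⟩ := (hlim.and (eventually_ge_atTop a)).exists
  obtain ⟨x, ⟨hax, hxb⟩, hx⟩ :=
    intermediate_value_Ioo' hb.2 (hcont.mono Icc_subset_Ici_self) ⟨hb.1, ha⟩
  exact ⟨x, ⟨hax, hx⟩, fun y hy => hanti.injOn hy.1 hax (hy.2.trans hx.symm)⟩

section DivAdd

variable {r : ℝ}

theorem strictMonoOn_div_add (hr : 0 < r) : StrictMonoOn (fun x : ℝ => x / (x + r)) (Ioi (-r)) := by
  intro x hx y hy hxy
  simp only [mem_Ioi] at hx hy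
  rw [div_lt_div_iff₀ (by linarith) (by linarith)]
  nlinarith

theorem continuousOn_div_add : ContinuousOn (fun x : ℝ => x / (x + r)) (Ioi (-r)) :=
  continuousOn_id.div (by fun_prop) fun x hx => by simp only [mem_Ioi] at hx; linarith

theorem tendsto_div_add_atTop (r : ℝ) : Tendsto (fun x : ℝ => x / (x + r)) atTop (𝓝 1) := by
  have h : Tendsto (fun x : ℝ => 1 - r * (x + r)⁻¹) atTop (𝓝 (1 - r * 0)) :=
    tendsto_const_nhds.sub <| tendsto_const_nhds.mul <|
      (tendsto_atTop_add_const_right _ r tendsto_id).inv_tendsto_atTop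
  rw [mul_zero, sub_zero] at h
  refine h.congr' ?_
  filter_upwards [eventually_gt_atTop (-r)] with x hx
  field_simp [show x + r ≠ 0 by linarith]
  ring

end DivAdd

section SumRpow

variable {ι : Type*} [Fintype ι] {w : ι → ℝ}

theorem continuous_sum_rpow (hw : ∀ i, 0 < w i) : Continuous fun t : ℝ => ∑ i, w i ^ t :=
  continuous_finsetSum _ fun i _ => continuous_const.rpow continuous_id fun _ => .inl (hw i).ne'

theorem strictAnti_sum_rpow [Nonempty ι] (hw : ∀ i, 0 < w i ∧ w i < 1) :
    StrictAnti fun t : ℝ => ∑ i, w i ^ t :=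
  fun _ _ hst => Finset.sum_lt_sum_of_nonempty Finset.univ_nonempty fun i _ =>
    Real.strictAnti_rpow_of_base_lt_one (hw i).1 (hw i).2 hst

end SumRpow

/-- There exists a unique `ξ > 0` with `∑ w_i^{ξ/(ξ+r)} = 1`, and
`ξ ↦ ∑ w_i^{ξ/(ξ+r)}` is strictly decreasing on `(0,∞)`. -/
theorem existsUnique_xi_and_strictAnti
    (N : ℕ) (hN : 2 ≤ N) (r : ℝ) (hr : 0 < r)
    (w : Fin N → ℝ) (hw : ∀ i, 0 < w i ∧ w i < 1) (hwsum : ∑ i, w i < 1) :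
    (∃! ξ : ℝ, 0 < ξ ∧ ∑ i, w i ^ (ξ / (ξ + r)) = 1) ∧
    StrictAntiOn (fun ξ : ℝ => ∑ i, w i ^ (ξ / (ξ + r))) (Set.Ioi 0) := by
  have : Nonempty (Fin N) := ⟨⟨0, by omega⟩⟩
  have hsub : Ici (0 : ℝ) ⊆ Ioi (-r) := Ici_subset_Ioi.2 (neg_neg_of_pos hr)
  have hcont := continuous_sum_rpow fun i => (hw i).1
  have hanti : StrictAntiOn (fun ξ : ℝ => ∑ i, w i ^ (ξ / (ξ + r))) (Ioi 0) :=
    (strictAnti_sum_rpow hw).comp_strictMonoOn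
      ((strictMonoOn_div_add hr).mono (Ioi_subset_Ici_self.trans hsub))
  refine ⟨existsUnique_gt_eq_of_strictAntiOn ?_ hanti ?_ ?_, hanti⟩
  · exact hcont.comp_continuousOn (continuousOn_div_add.mono hsub)
  · simp only [zero_div, Real.rpow_zero, Finset.sum_const, Finset.card_univ, Fintype.card_fin,
      nsmul_eq_mul, mul_one]
    exact_mod_cast hN
  · refine ((hcont.tendsto 1).comp (tendsto_div_add_atTop r)).eventually_lt_const ?_
    simpa only [Real.rpow_one] using hwsum
end
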